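/- Let P ⊆ ℝ^n be a pointed polyhedron with recession cone σ = Recc(P), and let P̄ be the closure of j(P) in N_ℝ(σ), where j : N_ℝ → N_ℝ(σ) sends v to the function u ↦ ⟨u,v⟩. Then P̄ = ⋃_{τ face of σ} ι(π_τ(P)), where π_τ : N_ℝ → N_ℝ/Span(τ) is the quotient map and ι(v̄)(u) = ⟨u,v⟩ for u ∈ τ^⊥ ∩ σ∨ and ι(v̄)(u) = −∞ otherwise; moreover the sets ι(π_τ(P)) for distinct faces τ of σ are pairwise disjoint. -/

import Mathlib

open Topology

noncomputable section

/-- The standard pairing `⟨u, v⟩ = ∑ i, u i * v i` on `ℝⁿ`. -/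
def dotp {n : ℕ} (u v : Fin n → ℝ) : ℝ := ∑ i, u i * v i

/-- The polyhedral cone generated by the vectors `v 0, …, v (s-1)`. -/
def coneOf {n s : ℕ} (v : Fin s → (Fin n → ℝ)) : Set (Fin n → ℝ) :=
  {x | ∃ lam : Fin s → ℝ, (∀ j, 0 ≤ lam j) ∧ x = ∑ j, lam j • v j}

/-- A set is a polyhedral cone if it is finitely generated. -/
def IsPolyCone {n : ℕ} (σ : Set (Fin n → ℝ)) : Prop :=
  ∃ (s : ℕ) (v : Fin s → (Fin n → ℝ)), σ = coneOf v

/-- The polar cone `σ∨ = {u | ⟨u,v⟩ ≤ 0 ∀ v ∈ σ}`. -/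
def polarCone {n : ℕ} (σ : Set (Fin n → ℝ)) : Set (Fin n → ℝ) :=
  {u | ∀ v ∈ σ, dotp u v ≤ 0}

/-- A cone is pointed if it contains no nonzero linear subspace. -/
def IsPointed {n : ℕ} (σ : Set (Fin n → ℝ)) : Prop :=
  ∀ W : Submodule ℝ (Fin n → ℝ), (W : Set (Fin n → ℝ)) ⊆ σ → W = ⊥

/-- The partial compactification `N_ℝ(σ)`: the set of `ℝ₊`-equivariant monoid morphisms
`φ : σ∨ → ℝ ∪ {-∞}`, realized as `EReal`-valued functions on `σ∨` never taking the
value `+∞`.  (In `EReal` one has `(0 : EReal) * ⊥ = 0`, which is the convention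
`0 · (-∞) = 0`.)  It is topologized as a subspace of the product
`σ∨ → EReal`, i.e. with the topology of pointwise convergence. -/
def NRc {n : ℕ} (σ : Set (Fin n → ℝ)) : Set (↥(polarCone σ) → EReal) :=
  {φ | (∀ u, φ u ≠ ⊤) ∧
    (∀ (u u' : ↥(polarCone σ)) (h : (u : Fin n → ℝ) + (u' : Fin n → ℝ) ∈ polarCone σ),
      φ ⟨(u : Fin n → ℝ) + (u' : Fin n → ℝ), h⟩ = φ u + φ u') ∧
    (∀ (c : ℝ), 0 ≤ c → ∀ (u : ↥(polarCone σ)) (h : c • (u : Fin n → ℝ) ∈ polarCone σ),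
      φ ⟨c • (u : Fin n → ℝ), h⟩ = (c : EReal) * φ u)}

/-- The canonical map `N_ℝ → (σ∨ → EReal)`, `v ↦ (u ↦ ⟨u,v⟩)`; its image lies in `N_ℝ(σ)`. -/
def jmap {n : ℕ} (σ : Set (Fin n → ℝ)) (v : Fin n → ℝ) : ↥(polarCone σ) → EReal :=
  fun u => ((dotp (u : Fin n → ℝ) v : ℝ) : EReal)


/-- `τ` is a face of the cone `σ`: `τ = σ ∩ {v | ⟨u,v⟩ = 0}` for some `u ∈ σ∨`. -/
def IsFace {n : ℕ} (σ τ : Set (Fin n → ℝ)) : Prop :=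
  ∃ u ∈ polarCone σ, τ = σ ∩ {v | dotp u v = 0}

open Classical in
/-- For a face `τ` of `σ` and `v ∈ N_ℝ`, the element `ι(π_τ(v))` of `σ∨ → EReal`:
`u ↦ ⟨u,v⟩` if `u ∈ τ^⊥ ∩ σ∨` and `u ↦ -∞` otherwise.  (Its value only depends on the
class `π_τ(v)` of `v` in `N_ℝ/Span(τ)`, so the image `iotaFace σ τ '' P` below is
exactly `ι(π_τ(P))`.) -/
def iotaFace {n : ℕ} (σ τ : Set (Fin n → ℝ)) (v : Fin n → ℝ) : ↥(polarCone σ) → EReal :=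
  fun u => if (∀ w ∈ τ, dotp (u : Fin n → ℝ) w = 0)
    then ((dotp (u : Fin n → ℝ) v : ℝ) : EReal) else ⊥

/-!
Elements of `N_ℝ(σ)` are additive and positively homogeneous on `σ∨`, and by Farkas' lemma
(a consequence of Fourier–Motzkin elimination) `σ∨` is the cone spanned by the `u i`; so an
element of `N_ℝ(σ)` is determined by its values `y i = φ (u i)`.

For `φ` in the closure of `j(P)`, let `I = {i | y i ≠ ⊥}` and `τ = σ ∩ ⋂_{i ∈ I} (u i)^⊥`, a face.
Since linear images of polyhedra are closed, some `v ∈ P` has `⟨u i, v⟩ = y i` for `i ∈ I`. For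
`i ∉ I`, the functional `u i` is unbounded below on a polyhedron containing approximants of `φ`,
so it is negative along some recession direction, which lies in `τ`. Hence `φ = ι(π_τ(v))`.
Conversely `ι(π_τ(p)) = lim_k j(p + k w)` for `w` in the relative interior of `τ`. Finally
`ι(π_τ(p))` determines `τ^⊥ ∩ σ∨`, which determines the face `τ`.
-/

open Matrix Filter

section Polyhedron

theorem exists_forall_mul_le {ι : Type*} [Finite ι] {b d : ι → ℝ}
    (h0 : ∀ i, b i = 0 → 0 ≤ d i) (hc : ∀ i j, b i < 0 → 0 < b j → b i * d j ≤ b j * d i) :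
    ∃ t : ℝ, ∀ i, b i * t ≤ d i := by
  set L := (fun i => d i / b i) '' {i | b i < 0}
  set U := (fun i => d i / b i) '' {i | 0 < b i}
  have hLU : ∀ l ∈ L, ∀ x ∈ U, l ≤ x := by
    rintro _ ⟨i, hi, rfl⟩ _ ⟨j, hj, rfl⟩
    rw [le_div_iff₀ hj, div_mul_eq_mul_div, div_le_iff_of_neg hi]
    linarith [hc i j hi hj]
  -- `sInf U` is the least upper constraint if there is one (and the junk value `0` otherwise)
  have hbdd : BddAbove (insert (sInf U) L) := (Set.toFinite _).bddAbove
  refine ⟨sSup (insert (sInf U) L), fun i => ?_⟩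
  rcases lt_trichotomy (b i) 0 with hi | hi | hi
  · rw [mul_comm, ← div_le_iff_of_neg hi]
    exact le_csSup hbdd (Set.mem_insert_of_mem _ ⟨i, hi, rfl⟩)
  · simpa [hi] using h0 i hi
  · rw [mul_comm, ← le_div_iff₀ hi]
    have hiU : d i / b i ∈ U := ⟨i, hi, rfl⟩
    refine csSup_le (Set.insert_nonempty _ _) ?_
    rintro x (rfl | hx)
    · exact csInf_le (Set.toFinite _).bddBelow hiU
    · exact hLU x hx _ hiU

variable {V W : Type*} [AddCommGroup V] [Module ℝ V] [AddCommGroup W] [Module ℝ W]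

def IsPolyhedron (S : Set V) : Prop :=
  ∃ (ι : Type) (_ : Fintype ι) (f : ι → V →ₗ[ℝ] ℝ) (c : ι → ℝ), S = {x | ∀ i, f i x ≤ c i}

theorem isPolyhedron_setOf_forall_eq_zero {κ : Type} [Fintype κ] (g : κ → V →ₗ[ℝ] ℝ) :
    IsPolyhedron {x | ∀ k, g k x = 0} := by
  refine ⟨κ ⊕ κ, inferInstance, Sum.elim g (-g), 0, ?_⟩
  ext x
  simp [le_antisymm_iff, forall_and]

namespace IsPolyhedron

theorem preimage {S : Set V} (h : IsPolyhedron S) (L : W →ₗ[ℝ] V) : IsPolyhedron (L ⁻¹' S) := by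
  obtain ⟨ι, _, f, c, rfl⟩ := h
  exact ⟨ι, inferInstance, fun i => (f i).comp L, c, rfl⟩

theorem image_equiv {S : Set V} (h : IsPolyhedron S) (e : V ≃ₗ[ℝ] W) : IsPolyhedron (e '' S) := by
  rw [e.image_eq_preimage_symm]
  exact h.preimage _

theorem inter {S T : Set V} (hS : IsPolyhedron S) (hT : IsPolyhedron T) :
    IsPolyhedron (S ∩ T) := by
  obtain ⟨ι, _, f, c, rfl⟩ := hS
  obtain ⟨κ, _, g, d, rfl⟩ := hT
  refine ⟨ι ⊕ κ, inferInstance, Sum.elim f g, Sum.elim c d, ?_⟩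
  ext x
  simp

/-- Fourier–Motzkin elimination of one real variable. -/
theorem image_snd_real {S : Set (ℝ × V)} (h : IsPolyhedron S) : IsPolyhedron (Prod.snd '' S) := by
  obtain ⟨ι, _, f, c, rfl⟩ := h
  set b : ι → ℝ := fun i => f i (1, 0)
  set g : ι → V →ₗ[ℝ] ℝ := fun i => (f i).comp (LinearMap.inr ℝ ℝ V)
  have hf : ∀ i t x, f i (t, x) = b i * t + g i x := by
    intro i t x
    have : ((t, x) : ℝ × V) = t • ((1 : ℝ), (0 : V)) + ((0 : ℝ), x) := by simp
    rw [this, map_add, map_smul, smul_eq_mul, mul_comm]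
    rfl
  refine ⟨ι ⊕ ι × ι, inferInstance,
    Sum.elim (fun i => if b i = 0 then g i else 0)
      (fun p => if b p.1 < 0 ∧ 0 < b p.2 then b p.2 • g p.1 - b p.1 • g p.2 else 0),
    Sum.elim (fun i => if b i = 0 then c i else 0)
      (fun p => if b p.1 < 0 ∧ 0 < b p.2 then b p.2 * c p.1 - b p.1 * c p.2 else 0), ?_⟩
  ext x
  simp only [Set.mem_image, Set.mem_ofPred_eq, Prod.exists, exists_eq_right,
    Sum.forall, Sum.elim_inl, Sum.elim_inr, Prod.forall, hf]
  constructor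
  · rintro ⟨t, ht⟩
    refine ⟨fun i => ?_, fun i j => ?_⟩
    · split_ifs with hi
      · simpa [hi] using ht i
      · simp
    · split_ifs with hij
      · simp only [LinearMap.sub_apply, LinearMap.smul_apply, smul_eq_mul]
        nlinarith [ht i, ht j]
      · simp
  · rintro ⟨h0, hc⟩
    obtain ⟨t, ht⟩ := exists_forall_mul_le (b := b) (d := fun i => c i - g i x)
      (fun i hi => by simpa [hi] using h0 i)
      (fun i j hi hj => by
        have := hc i j
        simp only [hi, hj, and_self, if_true, LinearMap.sub_apply, LinearMap.smul_apply,
          smul_eq_mul] at this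
        linarith)
    exact ⟨t, fun i => by linarith [ht i]⟩

theorem image_snd_fin {k : ℕ} {S : Set ((Fin k → ℝ) × V)} (h : IsPolyhedron S) :
    IsPolyhedron (Prod.snd '' S) := by
  induction k generalizing V with
  | zero =>
    have : Prod.snd '' S = (LinearMap.prod 0 LinearMap.id : V →ₗ[ℝ] (Fin 0 → ℝ) × V) ⁻¹' S := by
      ext x
      refine ⟨?_, fun hx => ⟨_, hx, rfl⟩⟩
      rintro ⟨⟨y, x⟩, hS, rfl⟩
      rwa [Subsingleton.elim y 0] at hS
    rw [this]
    exact h.preimage _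
  | succ k ih =>
    set E : ((Fin (k + 1) → ℝ) × V) ≃ₗ[ℝ] ℝ × ((Fin k → ℝ) × V) :=
      ((Fin.consLinearEquiv ℝ fun _ => ℝ).symm.prodCongr (LinearEquiv.refl ℝ V)).trans
        (LinearEquiv.prodAssoc ℝ ℝ (Fin k → ℝ) V)
    have : Prod.snd '' S = Prod.snd '' (Prod.snd '' (E '' S)) := by
      simp only [Set.image_image]
      rfl
    rw [this]
    exact ih (h.image_equiv E).image_snd_real

theorem image_snd {E : Type*} [AddCommGroup E] [Module ℝ E] [FiniteDimensional ℝ E]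
    {S : Set (E × V)} (h : IsPolyhedron S) : IsPolyhedron (Prod.snd '' S) := by
  set e := ((Module.finBasis ℝ E).equivFun).prodCongr (LinearEquiv.refl ℝ V)
  have : Prod.snd '' S = Prod.snd '' (e '' S) := by
    simp only [Set.image_image]
    rfl
  rw [this]
  exact (h.image_equiv e).image_snd_fin

theorem image {E : Type*} [AddCommGroup E] [Module ℝ E] [FiniteDimensional ℝ E]
    {κ : Type} [Fintype κ] {S : Set E} (h : IsPolyhedron S) (L : E →ₗ[ℝ] κ → ℝ) :
    IsPolyhedron (L '' S) := by
  have hgraph : IsPolyhedron {p : E × (κ → ℝ) | p.2 = L p.1} := by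
    convert isPolyhedron_setOf_forall_eq_zero fun k =>
      (LinearMap.proj k).comp (LinearMap.snd ℝ E (κ → ℝ) - L.comp (LinearMap.fst ℝ E (κ → ℝ)))
      using 1
    ext p
    simp [funext_iff, sub_eq_zero]
  have : L '' S = Prod.snd '' (Prod.fst ⁻¹' S ∩ {p | p.2 = L p.1}) := by
    ext y
    constructor
    · rintro ⟨x, hx, rfl⟩
      exact ⟨(x, L x), ⟨hx, rfl⟩, rfl⟩
    · rintro ⟨⟨x, _⟩, ⟨hx, hL⟩, rfl⟩
      exact ⟨x, hx, hL.symm⟩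
  rw [this]
  exact ((h.preimage (LinearMap.fst ℝ E (κ → ℝ))).inter hgraph).image_snd

theorem isClosed [TopologicalSpace V] [IsTopologicalAddGroup V] [ContinuousSMul ℝ V] [T2Space V]
    [FiniteDimensional ℝ V] {S : Set V} (h : IsPolyhedron S) : IsClosed S := by
  obtain ⟨ι, _, f, c, rfl⟩ := h
  simp only [Set.ofPred_forall]
  exact isClosed_iInter fun i => isClosed_le (f i).continuous_of_finiteDimensional continuous_const

end IsPolyhedron

end Polyhedron

section Pairing

variable {n : ℕ}

theorem dotp_eq_dotProduct (u v : Fin n → ℝ) : dotp u v = u ⬝ᵥ v := rfl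

theorem dotp_sum_smul_left {ι : Type*} [Fintype ι] (lam : ι → ℝ) (w : ι → Fin n → ℝ)
    (v : Fin n → ℝ) : dotp (∑ l, lam l • w l) v = ∑ l, lam l * dotp (w l) v := by
  simp [dotp_eq_dotProduct, sum_dotProduct, smul_dotProduct]

theorem exists_dotp_eq (f : (Fin n → ℝ) →ₗ[ℝ] ℝ) : ∃ z, ∀ x, f x = dotp z x := by
  refine ⟨fun i => f fun j => if i = j then 1 else 0, fun x => ?_⟩
  rw [LinearMap.pi_apply_eq_sum_univ]
  simp [dotp, mul_comm]

theorem nonpos_of_forall_nonneg_mul_le {a c : ℝ} (h : ∀ t : ℝ, 0 ≤ t → t * a ≤ c) : a ≤ 0 := by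
  by_contra! ha
  have := h ((|c| + 1) / a) (by positivity)
  rw [div_mul_cancel₀ _ ha.ne'] at this
  linarith [le_abs_self c]

/-- Farkas' lemma. -/
theorem mem_polarCone_iff {ι : Type} [Fintype ι] (w : ι → Fin n → ℝ) (x : Fin n → ℝ) :
    x ∈ polarCone {v | ∀ l, dotp (w l) v ≤ 0} ↔
      ∃ lam : ι → ℝ, (∀ l, 0 ≤ lam l) ∧ x = ∑ l, lam l • w l := by
  classical
  set Λ := Fintype.linearCombination ℝ w
  have hC : IsPolyhedron (Λ '' {lam | ∀ l, 0 ≤ lam l}) := by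
    refine IsPolyhedron.image ⟨ι, inferInstance, fun l => -LinearMap.proj l, 0, ?_⟩ Λ
    ext lam
    simp
  obtain ⟨κ, _, f, c, hfc⟩ := hC
  have hΛ : ∀ lam, Λ lam = ∑ l, lam l • w l := Fintype.linearCombination_apply ℝ w
  have hmem : ∀ lam : ι → ℝ, (∀ l, 0 ≤ lam l) → ∀ m, f m (Λ lam) ≤ c m := fun lam hlam =>
    (Set.ext_iff.1 hfc _).1 ⟨lam, hlam, rfl⟩
  constructor
  · intro hx
    have hxC : x ∈ Λ '' {lam | ∀ l, 0 ≤ lam l} := by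
      rw [hfc]
      intro m
      obtain ⟨z, hz⟩ := exists_dotp_eq (f m)
      -- `f m` is bounded above on a cone, so it is nonpositive there and `z` lies in the polar
      have hzσ : ∀ l, dotp (w l) z ≤ 0 := fun l => by
        rw [dotp_eq_dotProduct, dotProduct_comm, ← dotp_eq_dotProduct, ← hz]
        refine nonpos_of_forall_nonneg_mul_le (c := c m) fun t ht => ?_
        have := hmem (Pi.single l t) (Pi.single_nonneg.2 ht : (0 : ι → ℝ) ≤ Pi.single l t) m
        rwa [Fintype.linearCombination_apply_single, map_smul, smul_eq_mul] at this
      have h0 := hmem 0 (fun _ => le_rfl) m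
      rw [map_zero, map_zero] at h0
      rw [hz, dotp_eq_dotProduct, dotProduct_comm, ← dotp_eq_dotProduct]
      linarith [hx z hzσ]
    obtain ⟨lam, hlam, rfl⟩ := hxC
    exact ⟨lam, hlam, hΛ lam⟩
  · rintro ⟨lam, hlam, rfl⟩ v hv
    rw [dotp_sum_smul_left]
    exact Finset.sum_nonpos fun l _ => mul_nonpos_of_nonneg_of_nonpos (hlam l) (hv l)

theorem exists_recession_dotp_neg {ι : Type} [Fintype ι] (g : ι → Fin n → ℝ) (b : ι → ℝ)
    (f : Fin n → ℝ) (h : ∀ M : ℝ, ∃ p, (∀ l, dotp (g l) p ≤ b l) ∧ dotp f p < M) :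
    ∃ d, (∀ l, dotp (g l) d ≤ 0) ∧ dotp f d < 0 := by
  by_contra! hf
  obtain ⟨lam, hlam, hfl⟩ := (mem_polarCone_iff g (-f)).1 fun d hd => by
    rw [dotp_eq_dotProduct, neg_dotProduct]
    linarith [hf d hd, dotp_eq_dotProduct f d]
  obtain ⟨p, hp, hfp⟩ := h (-∑ l, lam l * b l)
  have : -dotp f p ≤ ∑ l, lam l * b l := calc
    -dotp f p = dotp (-f) p := by simp [dotp_eq_dotProduct]
    _ = ∑ l, lam l * dotp (g l) p := by rw [hfl, dotp_sum_smul_left]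
    _ ≤ ∑ l, lam l * b l := Finset.sum_le_sum fun l _ => mul_le_mul_of_nonneg_left (hp l) (hlam l)
  linarith

end Pairing

section PolyhedralCone

variable {n : ℕ} {σ τ τ' : Set (Fin n → ℝ)}

theorem IsFace.subset (h : IsFace σ τ) : τ ⊆ σ := by
  obtain ⟨u₀, -, rfl⟩ := h
  exact Set.inter_subset_left

theorem IsFace.eq_inter_perp (h : IsFace σ τ) :
    τ = σ ∩ {v | ∀ x ∈ polarCone σ, (∀ y ∈ τ, dotp x y = 0) → dotp x v = 0} := by
  obtain ⟨u₀, hu₀, rfl⟩ := h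
  ext v
  exact ⟨fun hv => ⟨hv.1, fun x _ hx => hx v hv⟩, fun hv => ⟨hv.1, hv.2 u₀ hu₀ fun y hy => hy.2⟩⟩

theorem IsFace.eq_of_perp_iff (hτ : IsFace σ τ) (hτ' : IsFace σ τ')
    (h : ∀ x ∈ polarCone σ, (∀ y ∈ τ, dotp x y = 0) ↔ ∀ y ∈ τ', dotp x y = 0) : τ = τ' := by
  rw [hτ.eq_inter_perp, hτ'.eq_inter_perp]
  ext v
  simp only [Set.mem_inter_iff, Set.mem_ofPred_eq]
  exact and_congr_right fun _ => forall₂_congr fun x hx => by rw [h x hx]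

theorem perp_iff_of_iotaFace_eq {v v' : Fin n → ℝ} (h : iotaFace σ τ v = iotaFace σ τ' v')
    (x : polarCone σ) : (∀ y ∈ τ, dotp x y = 0) ↔ ∀ y ∈ τ', dotp x y = 0 := by
  have hx := congrFun h x
  simp only [iotaFace] at hx
  split_ifs at hx with h₁ h₂ h₂
  · exact iff_of_true h₁ h₂
  · exact absurd hx (EReal.coe_ne_bot _)
  · exact absurd hx.symm (EReal.coe_ne_bot _)
  · exact iff_of_false h₁ h₂

theorem IsFace.eq_of_iotaFace_eq (hτ : IsFace σ τ) (hτ' : IsFace σ τ') {v v' : Fin n → ℝ}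
    (h : iotaFace σ τ v = iotaFace σ τ' v') : τ = τ' :=
  hτ.eq_of_perp_iff hτ' fun x hx => perp_iff_of_iotaFace_eq h ⟨x, hx⟩

variable {ι : Type*} {u : ι → Fin n → ℝ}

theorem mem_polarCone_of_eq (hσ : σ = {v | ∀ i, dotp (u i) v ≤ 0}) (i : ι) :
    u i ∈ polarCone σ := by
  subst hσ
  exact fun v hv => hv i

theorem isFace_inter_perp (hσ : σ = {v | ∀ i, dotp (u i) v ≤ 0}) (J : Finset ι) :
    IsFace σ (σ ∩ {v | ∀ i ∈ J, dotp (u i) v = 0}) := by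
  subst hσ
  refine ⟨∑ i ∈ J, u i, fun v hv => ?_, ?_⟩
  · rw [dotp_eq_dotProduct, sum_dotProduct]
    exact Finset.sum_nonpos fun i _ => hv i
  · ext v
    simp only [Set.mem_inter_iff, Set.mem_ofPred_eq, and_congr_right_iff]
    intro hv
    rw [dotp_eq_dotProduct, sum_dotProduct]
    exact (Finset.sum_eq_zero_iff_of_nonpos fun i _ => hv i).symm

theorem IsFace.sum_mem (hσ : σ = {v | ∀ i, dotp (u i) v ≤ 0}) (hτ : IsFace σ τ)
    {κ : Type*} (s : Finset κ) {y : κ → Fin n → ℝ} (hy : ∀ k ∈ s, y k ∈ τ) : ∑ k ∈ s, y k ∈ τ := by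
  subst hσ
  obtain ⟨u₀, -, rfl⟩ := hτ
  refine ⟨fun i => ?_, ?_⟩
  · rw [dotp_eq_dotProduct, dotProduct_sum]
    exact Finset.sum_nonpos fun k hk => (hy k hk).1 i
  · rw [Set.mem_ofPred_eq, dotp_eq_dotProduct, dotProduct_sum]
    exact Finset.sum_eq_zero fun k hk => (hy k hk).2

theorem IsFace.zero_mem (hσ : σ = {v | ∀ i, dotp (u i) v ≤ 0}) (hτ : IsFace σ τ) :
    (0 : Fin n → ℝ) ∈ τ := by
  subst hσ
  obtain ⟨u₀, -, rfl⟩ := hτ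
  exact ⟨fun i => by simp [dotp], by simp [dotp]⟩

theorem add_smul_mem_of_mem_recession {a : ι → ℝ} {P : Set (Fin n → ℝ)}
    (hP : P = {v | ∀ i, dotp (u i) v ≤ a i}) (hσ : σ = {v | ∀ i, dotp (u i) v ≤ 0})
    {p w : Fin n → ℝ} (hp : p ∈ P) (hw : w ∈ σ) {t : ℝ} (ht : 0 ≤ t) : p + t • w ∈ P := by
  subst hP hσ
  intro i
  have hpi : u i ⬝ᵥ p ≤ a i := hp i
  have hwi : t * u i ⬝ᵥ w ≤ 0 := mul_nonpos_of_nonneg_of_nonpos ht (hw i)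
  rw [dotp_eq_dotProduct, dotProduct_add, dotProduct_smul, smul_eq_mul]
  linarith

theorem IsFace.exists_mem_forall_perp_or_neg [Fintype ι] (hσ : σ = {v | ∀ i, dotp (u i) v ≤ 0})
    (hτ : IsFace σ τ) : ∃ w ∈ τ, ∀ i, (∀ y ∈ τ, dotp (u i) y = 0) ∨ dotp (u i) w < 0 := by
  have hneg : ∀ i, ∀ y ∈ τ, dotp (u i) y ≤ 0 := fun i y hy => by
    have := hτ.subset hy
    rw [hσ] at this
    exact this i
  have hwit : ∀ i, ∃ y ∈ τ, (∀ y ∈ τ, dotp (u i) y = 0) ∨ dotp (u i) y < 0 := by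
    intro i
    by_cases h : ∀ y ∈ τ, dotp (u i) y = 0
    · exact ⟨0, hτ.zero_mem hσ, Or.inl h⟩
    · obtain ⟨y, hy, hne⟩ := not_forall₂.1 h
      exact ⟨y, hy, Or.inr ((hneg i y hy).lt_of_ne hne)⟩
  choose y hyτ hy using hwit
  refine ⟨∑ j, y j, hτ.sum_mem hσ _ fun j _ => hyτ j, fun i => (hy i).imp_right fun hlt => ?_⟩
  rw [dotp_eq_dotProduct, dotProduct_sum]
  calc ∑ j, u i ⬝ᵥ y j < ∑ _j : ι, (0 : ℝ) :=
        Finset.sum_lt_sum (fun j _ => hneg i _ (hyτ j)) ⟨i, Finset.mem_univ _, hlt⟩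
    _ = 0 := Finset.sum_const_zero

end PolyhedralCone

section Compactification

variable {n : ℕ} {σ τ : Set (Fin n → ℝ)}

theorem iotaFace_of_perp {x : polarCone σ} (h : ∀ y ∈ τ, dotp x y = 0) (v : Fin n → ℝ) :
    iotaFace σ τ v x = dotp x v :=
  if_pos h

theorem iotaFace_of_not_perp {x : polarCone σ} (h : ¬∀ y ∈ τ, dotp x y = 0) (v : Fin n → ℝ) :
    iotaFace σ τ v x = ⊥ :=
  if_neg h

theorem iotaFace_mem_NRc (hτ : τ ⊆ σ) (v : Fin n → ℝ) : iotaFace σ τ v ∈ NRc σ := by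
  refine ⟨fun x => ?_, fun x x' h => ?_, fun c hc x h => ?_⟩
  · by_cases hx : ∀ y ∈ τ, dotp x y = 0
    · simp [iotaFace_of_perp hx]
    · simp [iotaFace_of_not_perp hx]
  · -- on `τ ⊆ σ` both `x` and `x'` are nonpositive, so `x + x'` vanishes there iff both do
    have key : (∀ y ∈ τ, dotp ((x : Fin n → ℝ) + (x' : Fin n → ℝ)) y = 0) ↔
        (∀ y ∈ τ, dotp x y = 0) ∧ ∀ y ∈ τ, dotp x' y = 0 := by
      simp only [dotp_eq_dotProduct, add_dotProduct, ← forall_and]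
      refine forall₂_congr fun y hy => ⟨fun hs => ?_, fun h => by rw [h.1, h.2, add_zero]⟩
      have h₁ : (x : Fin n → ℝ) ⬝ᵥ y ≤ 0 := x.2 y (hτ hy)
      have h₂ : (x' : Fin n → ℝ) ⬝ᵥ y ≤ 0 := x'.2 y (hτ hy)
      constructor <;> linarith
    by_cases hx : ∀ y ∈ τ, dotp x y = 0
    · by_cases hx' : ∀ y ∈ τ, dotp x' y = 0
      · rw [iotaFace_of_perp (key.2 ⟨hx, hx'⟩), iotaFace_of_perp hx, iotaFace_of_perp hx',
          dotp_eq_dotProduct, add_dotProduct, EReal.coe_add]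
        rfl
      · rw [iotaFace_of_not_perp (by tauto), iotaFace_of_not_perp hx', EReal.add_bot]
    · rw [iotaFace_of_not_perp (by tauto), iotaFace_of_not_perp hx, EReal.bot_add]
  · rcases hc.eq_or_lt with rfl | hc
    · simp [iotaFace, dotp_eq_dotProduct]
    · have key : (∀ y ∈ τ, dotp (c • (x : Fin n → ℝ)) y = 0) ↔ ∀ y ∈ τ, dotp x y = 0 := by
        simp [dotp_eq_dotProduct, smul_dotProduct, hc.ne']
      by_cases hx : ∀ y ∈ τ, dotp x y = 0
      · rw [iotaFace_of_perp (key.2 hx), iotaFace_of_perp hx, dotp_eq_dotProduct, smul_dotProduct,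
          smul_eq_mul, EReal.coe_mul]
        rfl
      · rw [iotaFace_of_not_perp (key.not.2 hx), iotaFace_of_not_perp hx,
          EReal.coe_mul_bot_of_pos hc]

theorem jmap_eq_iotaFace_empty (v : Fin n → ℝ) : jmap σ v = iotaFace σ ∅ v := by
  funext x
  simp [jmap, iotaFace]

theorem jmap_mem_NRc (v : Fin n → ℝ) : jmap σ v ∈ NRc σ :=
  jmap_eq_iotaFace_empty v ▸ iotaFace_mem_NRc (Set.empty_subset σ) v

theorem sum_smul_mem_polarCone {ι : Type*} (s : Finset ι) {lam : ι → ℝ} (hlam : ∀ i, 0 ≤ lam i)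
    (g : ι → polarCone σ) : ∑ i ∈ s, lam i • (g i : Fin n → ℝ) ∈ polarCone σ := fun v hv => by
  rw [dotp_eq_dotProduct, sum_dotProduct]
  refine Finset.sum_nonpos fun i _ => ?_
  rw [smul_dotProduct, smul_eq_mul]
  exact mul_nonpos_of_nonneg_of_nonpos (hlam i) ((g i).2 v hv)

theorem NRc.apply_sum {φ : polarCone σ → EReal} (hφ : φ ∈ NRc σ) {ι : Type*} (s : Finset ι)
    {lam : ι → ℝ} (hlam : ∀ i, 0 ≤ lam i) (g : ι → polarCone σ) :
    φ ⟨∑ i ∈ s, lam i • (g i : Fin n → ℝ), sum_smul_mem_polarCone s hlam g⟩ =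
      ∑ i ∈ s, (lam i : EReal) * φ (g i) := by
  classical
  induction s using Finset.induction_on with
  | empty =>
    have h0 : (0 : Fin n → ℝ) ∈ polarCone σ := by simpa using sum_smul_mem_polarCone ∅ hlam g
    simpa using hφ.2.2 0 le_rfl ⟨0, h0⟩ (by simpa using h0)
  | insert a s ha ih =>
    have ha_mem : lam a • (g a : Fin n → ℝ) ∈ polarCone σ := by
      simpa using sum_smul_mem_polarCone ({a} : Finset ι) hlam g
    have hsplit := hφ.2.1 ⟨_, ha_mem⟩ ⟨_, sum_smul_mem_polarCone s hlam g⟩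
      (by simpa [Finset.sum_insert ha] using sum_smul_mem_polarCone (insert a s) hlam g)
    simp only [Finset.sum_insert ha, hφ.2.2 _ (hlam a) (g a), ih] at hsplit ⊢
    exact hsplit

theorem NRc.ext_of_generators {ι : Type*} [Fintype ι] (g : ι → polarCone σ)
    (hgen : ∀ x ∈ polarCone σ,
      ∃ lam : ι → ℝ, (∀ i, 0 ≤ lam i) ∧ x = ∑ i, lam i • (g i : Fin n → ℝ))
    {φ ψ : polarCone σ → EReal} (hφ : φ ∈ NRc σ) (hψ : ψ ∈ NRc σ) (h : ∀ i, φ (g i) = ψ (g i)) :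
    φ = ψ := by
  funext x
  obtain ⟨lam, hlam, hx⟩ := hgen x x.2
  obtain rfl : x = ⟨_, sum_smul_mem_polarCone Finset.univ hlam g⟩ := Subtype.ext hx
  rw [NRc.apply_sum hφ _ hlam, NRc.apply_sum hψ _ hlam]
  simp only [h]

theorem tendsto_jmap_add_nat_smul {w : Fin n → ℝ} (hw : w ∈ σ) (p : Fin n → ℝ) :
    Tendsto (fun k : ℕ => jmap σ (p + (k : ℝ) • w)) atTop (𝓝 (iotaFace σ {w} p)) := by
  refine tendsto_pi_nhds.2 fun x => ?_
  have hval : ∀ k : ℕ,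
      jmap σ (p + (k : ℝ) • w) x = ((dotp x p + k * dotp x w : ℝ) : EReal) := fun k => by
    simp [jmap, dotp_eq_dotProduct, dotProduct_add, dotProduct_smul]
  simp only [hval]
  by_cases hxw : dotp x w = 0
  · rw [iotaFace_of_perp (by simpa using hxw)]
    simp [hxw]
  · rw [iotaFace_of_not_perp (by simpa using hxw), EReal.tendsto_coe_nhds_bot_iff]
    exact tendsto_atBot_add_const_left _ _
      (tendsto_natCast_atTop_atTop.atTop_mul_const_of_neg ((x.2 w hw).lt_of_ne hxw))

end Compactification

theorem tendsto_toReal_of_tendsto_coe {α : Type*} {l : Filter α} {f : α → ℝ} {y : EReal}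
    (h : Tendsto (fun k => (f k : EReal)) l (𝓝 y)) (h_top : y ≠ ⊤) (h_bot : y ≠ ⊥) :
    Tendsto f l (𝓝 y.toReal) := by
  rwa [← EReal.tendsto_coe, EReal.coe_toReal h_top h_bot]

section Approximation

variable {n : ℕ} {ι : Type} [Fintype ι] {u : ι → Fin n → ℝ} {a : ι → ℝ}
  {P σ τ : Set (Fin n → ℝ)}

theorem isPolyhedron_of_eq (hP : P = {v | ∀ i, dotp (u i) v ≤ a i}) : IsPolyhedron P :=
  ⟨ι, inferInstance, fun i => (LinearMap.proj i).comp (Matrix.of u).mulVecLin, a, hP⟩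

theorem NRc.ext_of_polyhedral (hσ : σ = {v | ∀ i, dotp (u i) v ≤ 0}) {φ ψ : polarCone σ → EReal}
    (hφ : φ ∈ NRc σ) (hψ : ψ ∈ NRc σ)
    (h : ∀ i, φ ⟨u i, mem_polarCone_of_eq hσ i⟩ = ψ ⟨u i, mem_polarCone_of_eq hσ i⟩) : φ = ψ :=
  NRc.ext_of_generators (fun i => ⟨u i, mem_polarCone_of_eq hσ i⟩)
    (fun x hx => (mem_polarCone_iff u x).1 (hσ ▸ hx)) hφ hψ h

theorem exists_seq_of_mem_closure {y : ι → EReal}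
    (hy : y ∈ closure ((fun p i => (dotp (u i) p : EReal)) '' P)) :
    ∃ p : ℕ → Fin n → ℝ, (∀ k, p k ∈ P) ∧
      ∀ i, Tendsto (fun k => (dotp (u i) (p k) : EReal)) atTop (𝓝 (y i)) := by
  obtain ⟨x, hx, hlim⟩ := mem_closure_iff_seq_limit.1 hy
  choose p hp hpx using hx
  exact ⟨p, hp, fun i => by simpa [← hpx] using tendsto_pi_nhds.1 hlim i⟩

theorem exists_mem_eq_of_mem_closure (hP : P = {v | ∀ i, dotp (u i) v ≤ a i}) {y : ι → EReal}
    (hy : y ∈ closure ((fun p i => (dotp (u i) p : EReal)) '' P)) (hy_top : ∀ i, y i ≠ ⊤) :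
    ∃ v ∈ P, ∀ i, y i ≠ ⊥ → y i = dotp (u i) v := by
  obtain ⟨p, hpP, hp⟩ := exists_seq_of_mem_closure hy
  let L : (Fin n → ℝ) →ₗ[ℝ] {i // y i ≠ ⊥} → ℝ :=
    (Matrix.of fun i : {i // y i ≠ ⊥} => u i).mulVecLin
  have hlim : Tendsto (fun k => L (p k)) atTop (𝓝 fun i => (y i).toReal) :=
    tendsto_pi_nhds.2 fun i => tendsto_toReal_of_tendsto_coe (hp i) (hy_top i) i.2
  obtain ⟨v, hvP, hv⟩ : (fun i : {i // y i ≠ ⊥} => (y i).toReal) ∈ L '' P :=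
    ((isPolyhedron_of_eq hP).image L).isClosed.mem_of_tendsto hlim
      (Eventually.of_forall fun k => ⟨p k, hpP k, rfl⟩)
  refine ⟨v, hvP, fun i hi => ?_⟩
  rw [← EReal.coe_toReal (hy_top i) hi, ← congrFun hv ⟨i, hi⟩]
  rfl

theorem exists_recession_of_mem_closure (hP : P = {v | ∀ i, dotp (u i) v ≤ a i})
    (hσ : σ = {v | ∀ i, dotp (u i) v ≤ 0}) {y : ι → EReal}
    (hy : y ∈ closure ((fun p i => (dotp (u i) p : EReal)) '' P)) (hy_top : ∀ i, y i ≠ ⊤)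
    {j : ι} (hj : y j = ⊥) : ∃ d ∈ σ, (∀ i, y i ≠ ⊥ → dotp (u i) d = 0) ∧ dotp (u j) d < 0 := by
  obtain ⟨p, hpP, hp⟩ := exists_seq_of_mem_closure hy
  subst hP hσ
  -- eventually `p k` lies in the polyhedron `P ∩ {v | y i - 1 ≤ dotp (u i) v for y i ≠ ⊥}`,
  -- on which `dotp (u j)` is unbounded below
  obtain ⟨d, hd, hdj⟩ := exists_recession_dotp_neg (Sum.elim u fun i : {i // y i ≠ ⊥} => -u i)
      (Sum.elim a fun i => 1 - (y i).toReal) (u j) fun M => by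
    have hfin : ∀ᶠ k in atTop, ∀ i : {i // y i ≠ ⊥}, (y i).toReal - 1 < dotp (u i) (p k) :=
      eventually_all.2 fun i =>
        (tendsto_toReal_of_tendsto_coe (hp i) (hy_top i) i.2).eventually_const_lt (by linarith)
    have hbot : ∀ᶠ k in atTop, dotp (u j) (p k) < M := by
      have := hp j
      rw [hj, EReal.tendsto_coe_nhds_bot_iff] at this
      exact this.eventually_lt_atBot M
    obtain ⟨k, hk, hkM⟩ := (hfin.and hbot).exists
    refine ⟨p k, Sum.forall.2 ⟨hpP k, fun i => ?_⟩, hkM⟩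
    have := hk i
    simp only [Sum.elim_inr, dotp_eq_dotProduct, neg_dotProduct] at this ⊢
    linarith
  refine ⟨d, fun i => hd (Sum.inl i), fun i hi => ?_, hdj⟩
  have h₁ := hd (Sum.inl i)
  have h₂ := hd (Sum.inr ⟨i, hi⟩)
  simp only [Sum.elim_inl, Sum.elim_inr, dotp_eq_dotProduct, neg_dotProduct] at h₁ h₂ ⊢
  linarith

theorem exists_isFace_eq_iotaFace_of_mem_closure (hP : P = {v | ∀ i, dotp (u i) v ≤ a i})
    (hσ : σ = {v | ∀ i, dotp (u i) v ≤ 0}) {φ : NRc σ}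
    (hφ : φ ∈ closure ((fun φ : NRc σ => (φ : polarCone σ → EReal)) ⁻¹' (jmap σ '' P))) :
    ∃ τ, IsFace σ τ ∧ ∃ v ∈ P, iotaFace σ τ v = φ := by
  set y : ι → EReal := fun i => (φ : polarCone σ → EReal) ⟨u i, mem_polarCone_of_eq hσ i⟩
  have hy : y ∈ closure ((fun p i => (dotp (u i) p : EReal)) '' P) := by
    refine map_mem_closure (f := fun ψ : NRc σ => fun i =>
      (ψ : polarCone σ → EReal) ⟨u i, mem_polarCone_of_eq hσ i⟩)
      (t := (fun p i => (dotp (u i) p : EReal)) '' P)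
      (continuous_pi fun i => (continuous_apply _).comp continuous_subtype_val) hφ ?_
    rintro ψ ⟨p, hp, hψ⟩
    exact ⟨p, hp, by simp [← hψ, jmap]⟩
  have hy_top : ∀ i, y i ≠ ⊤ := fun i => φ.2.1 _
  obtain ⟨v, hvP, hv⟩ := exists_mem_eq_of_mem_closure hP hy hy_top
  set J := Finset.univ.filter fun i => y i ≠ ⊥
  set τ := σ ∩ {x | ∀ k ∈ J, dotp (u k) x = 0}
  refine ⟨τ, isFace_inter_perp hσ J, v, hvP, NRc.ext_of_polyhedral hσ
    (iotaFace_mem_NRc Set.inter_subset_left v) φ.2 fun i => ?_⟩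
  by_cases hi : y i = ⊥
  · obtain ⟨d, hdσ, hd, hdi⟩ := exists_recession_of_mem_closure hP hσ hy hy_top hi
    have hdτ : d ∈ τ := ⟨hdσ, fun k hk => hd k (by simpa [J] using hk)⟩
    rw [iotaFace_of_not_perp fun h => (h d hdτ).not_lt hdi]
    exact hi.symm
  · have hperp : ∀ x ∈ τ, dotp (u i) x = 0 := fun x hx => hx.2 i (by simpa [J] using hi)
    rw [iotaFace_of_perp hperp]
    exact (hv i hi).symm

theorem iotaFace_mem_closure (hP : P = {v | ∀ i, dotp (u i) v ≤ a i})
    (hσ : σ = {v | ∀ i, dotp (u i) v ≤ 0}) (hτ : IsFace σ τ) {p : Fin n → ℝ} (hp : p ∈ P) :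
    (⟨iotaFace σ τ p, iotaFace_mem_NRc hτ.subset p⟩ : NRc σ) ∈
      closure ((fun φ : NRc σ => (φ : polarCone σ → EReal)) ⁻¹' (jmap σ '' P)) := by
  obtain ⟨w, hwτ, hw⟩ := hτ.exists_mem_forall_perp_or_neg hσ
  have hwσ := hτ.subset hwτ
  have hlim : iotaFace σ {w} p = iotaFace σ τ p := by
    refine NRc.ext_of_polyhedral hσ (iotaFace_mem_NRc (by simpa using hwσ) p)
      (iotaFace_mem_NRc hτ.subset p) fun i => ?_
    rcases hw i with h | h
    · rw [iotaFace_of_perp (by simpa using h w hwτ), iotaFace_of_perp h]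
    · rw [iotaFace_of_not_perp (by simpa using h.ne),
        iotaFace_of_not_perp fun h' => h.ne (h' w hwτ)]
  have htend : Tendsto (fun k : ℕ => (⟨jmap σ (p + (k : ℝ) • w), jmap_mem_NRc _⟩ : NRc σ)) atTop
      (𝓝 ⟨iotaFace σ τ p, iotaFace_mem_NRc hτ.subset p⟩) := by
    rw [tendsto_subtype_rng]
    simpa only [hlim] using tendsto_jmap_add_nat_smul hwσ p
  exact mem_closure_of_tendsto htend (Eventually.of_forall fun k =>
    ⟨p + (k : ℝ) • w, add_smul_mem_of_mem_recession hP hσ hp hwσ k.cast_nonneg, rfl⟩)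

end Approximation

theorem stmt4_general {n r : ℕ} (u : Fin r → (Fin n → ℝ)) (a : Fin r → ℝ)
    (P σ : Set (Fin n → ℝ))
    (hP : P = {v | ∀ i, dotp (u i) v ≤ a i})
    (hσ : σ = {v | ∀ i, dotp (u i) v ≤ 0}) :
    closure ((fun φ : ↥(NRc σ) => (φ : ↥(polarCone σ) → EReal)) ⁻¹' (jmap σ '' P)) =
      (⋃ τ : {τ : Set (Fin n → ℝ) // IsFace σ τ},
        (fun φ : ↥(NRc σ) => (φ : ↥(polarCone σ) → EReal)) ⁻¹'
          (iotaFace σ (τ : Set (Fin n → ℝ)) '' P)) ∧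
    Pairwise (fun τ τ' : {τ : Set (Fin n → ℝ) // IsFace σ τ} =>
      Disjoint (iotaFace σ (τ : Set (Fin n → ℝ)) '' P)
        (iotaFace σ (τ' : Set (Fin n → ℝ)) '' P)) := by
  refine ⟨subset_antisymm (fun φ hφ => ?_) ?_, fun τ τ' hne => ?_⟩
  · obtain ⟨τ, hτ, v, hvP, hv⟩ := exists_isFace_eq_iotaFace_of_mem_closure hP hσ hφ
    exact Set.mem_iUnion.2 ⟨⟨τ, hτ⟩, v, hvP, hv⟩
  · refine Set.iUnion_subset fun τ => ?_
    rintro φ ⟨p, hp, hφ⟩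
    obtain rfl : φ = ⟨iotaFace σ τ p, iotaFace_mem_NRc τ.2.subset p⟩ := Subtype.ext hφ.symm
    exact iotaFace_mem_closure hP hσ τ.2 hp
  · refine Set.disjoint_left.2 ?_
    rintro ψ ⟨v, -, hv⟩ ⟨v', -, hv'⟩
    exact hne (Subtype.ext (τ.2.eq_of_iotaFace_eq τ'.2 (hv.trans hv'.symm)))

/-- Let `P ⊆ ℝⁿ` be a pointed polyhedron with recession cone
`σ = Recc(P)`, and let `P̄` be the closure of `j(P)` in `N_ℝ(σ)`.  Then
`P̄ = ⋃_{τ face of σ} ι(π_τ(P))` and the sets `ι(π_τ(P))` for distinct faces `τ` are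
pairwise disjoint. -/
theorem stmt4 {n r : ℕ} (u : Fin r → (Fin n → ℝ)) (a : Fin r → ℝ)
    (P σ : Set (Fin n → ℝ))
    (hP : P = {v | ∀ i, dotp (u i) v ≤ a i})
    (hσ : σ = {v | ∀ i, dotp (u i) v ≤ 0})
    (hpt : IsPointed σ) :
    closure ((fun φ : ↥(NRc σ) => (φ : ↥(polarCone σ) → EReal)) ⁻¹' (jmap σ '' P)) =
      (⋃ τ : {τ : Set (Fin n → ℝ) // IsFace σ τ},
        (fun φ : ↥(NRc σ) => (φ : ↥(polarCone σ) → EReal)) ⁻¹'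
          (iotaFace σ (τ : Set (Fin n → ℝ)) '' P)) ∧
    Pairwise (fun τ τ' : {τ : Set (Fin n → ℝ) // IsFace σ τ} =>
      Disjoint (iotaFace σ (τ : Set (Fin n → ℝ)) '' P)
        (iotaFace σ (τ' : Set (Fin n → ℝ)) '' P)) :=
  stmt4_general u a P σ hP hσ

end
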